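/- Let k be a field and H a finite-dimensional bialgebra over k, with comultiplication in Sweedler notation Δ(h) = Σ h_{(1)} ⊗ h_{(2)}, counit ε, and dual space H*. Define σ_bi : H ⊗ H* → H* ⊗ H, h ⊗ l ↦ Σ (x ↦ l(x·h_{(2)})) ⊗ h_{(1)}. If σ_bi is bijective, then H admits an antipode, i.e. there exists a linear map S : H → H such that Σ S(h_{(1)})h_{(2)} = ε(h)1 = Σ h_{(1)}S(h_{(2)}) for all h ∈ H (so H is a Hopf algebra). -/

import Mathlib

open TensorProduct

variable (k : Type*) [Field k] (H : Type*) [Ring H] [Bialgebra k H]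

/-- The bilinear contraction `H ⊗ H* → H*`, `h ⊗ l ↦ (x ↦ l (x * h))`. -/
noncomputable def rightMulDual : H ⊗[k] Module.Dual k H →ₗ[k] Module.Dual k H :=
  TensorProduct.lift
    ((LinearMap.llcomp k H H k).flip ∘ₗ (LinearMap.mul k H).flip)

/-- The braiding `σ_bi : H ⊗ H* → H* ⊗ H`,
`h ⊗ l ↦ Σ (x ↦ l (x · h₍₂₎)) ⊗ h₍₁₎` (Sweedler notation). -/
noncomputable def sigmaBi : H ⊗[k] Module.Dual k H →ₗ[k] Module.Dual k H ⊗[k] H :=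
  (TensorProduct.comm k H (Module.Dual k H)).toLinearMap
    ∘ₗ (LinearMap.lTensor H (rightMulDual k H))
    ∘ₗ (TensorProduct.assoc k H H (Module.Dual k H)).toLinearMap
    ∘ₗ ((Coalgebra.comul (R := k) (A := H)).rTensor (Module.Dual k H))

/-!
The map `φ ↦ (h ⊗ l ↦ Σ h₍₁₎ ⊗ l(· φ(h₍₂₎)))` is an injective ring homomorphism from the
convolution algebra `End(H)` to `End(H ⊗ H*)`, and it sends `id` to `σ_bi` up to swapping the
tensor factors. So if `σ_bi` is invertible, `id` is not a zero divisor in the convolution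
algebra; as this algebra is finite-dimensional, hence Artinian, `id` is a unit there, and its
convolution inverse is an antipode.
-/

open WithConv Coalgebra

lemma IsArtinianRing.isUnit_of_isUnit_map {R S F : Type*} [Ring R] [IsArtinianRing R]
    [MonoidWithZero S] [FunLike F R S] [MonoidWithZeroHomClass F R S] {f : F}
    (hf : Function.Injective f) {a : R} (h : IsUnit (f a)) : IsUnit a :=
  isUnit_of_mem_nonZeroDivisors (mem_nonZeroDivisors_of_injective hf h.mem_nonZeroDivisors)

instance WithConv.instIsArtinianRing {K C A : Type*} [Field K] [AddCommGroup C] [Module K C]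
    [Coalgebra K C] [Ring A] [Algebra K A] [FiniteDimensional K C] [FiniteDimensional K A] :
    IsArtinianRing (WithConv (C →ₗ[K] A)) :=
  have : Module.Finite K (WithConv (C →ₗ[K] A)) :=
    Module.Finite.equiv (WithConv.linearEquiv K (C →ₗ[K] A)).symm
  IsArtinianRing.of_finite K _

section ConvAct

variable {R C A M : Type*} [CommSemiring R] [AddCommMonoid C] [Module R C] [Coalgebra R C]
  [Semiring A] [Algebra R A] [AddCommMonoid M] [Module R M] (ρ : A →ₐ[R] Module.End R M)

noncomputable def convAct (φ : WithConv (C →ₗ[R] A)) : Module.End R (C ⊗[R] M) :=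
  (lift ρ.toLinearMap).lTensor C ∘ₗ (TensorProduct.assoc R C A M).toLinearMap
    ∘ₗ (φ.ofConv.lTensor C ∘ₗ comul).rTensor M

lemma Coalgebra.Repr.convAct_tmul {ι : Type*} {c : C} (𝓡 : Repr R c ι)
    (φ : WithConv (C →ₗ[R] A)) (m : M) :
    convAct ρ φ (c ⊗ₜ m) = ∑ i ∈ 𝓡.index, 𝓡.left i ⊗ₜ ρ (φ (𝓡.right i)) m := by
  simp [convAct, ← 𝓡.eq, map_sum, sum_tmul]

lemma convAct_one : convAct ρ (1 : WithConv (C →ₗ[R] A)) = 1 := by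
  ext c m
  simp [convAct, LinearMap.convOne_def, LinearMap.lTensor_comp]

lemma convAct_mul (φ ψ : WithConv (C →ₗ[R] A)) :
    convAct ρ (φ * ψ) = convAct ρ φ * convAct ρ ψ := by
  refine TensorProduct.ext' fun c m ↦ ?_
  let 𝓡 := ℛ R c
  let g : C ⊗[R] C →ₗ[R] M :=
    LinearMap.applyₗ m ∘ₗ ρ.toLinearMap ∘ₗ LinearMap.mul' R A ∘ₗ map φ.ofConv ψ.ofConv
  have coassoc := congr(g.lTensor C
    $(sum_tmul_tmul_eq 𝓡 (fun i ↦ ℛ R (𝓡.left i)) (fun i ↦ ℛ R (𝓡.right i))))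
  simp only [g, map_sum, LinearMap.lTensor_tmul, LinearMap.coe_comp, AlgHom.coe_toLinearMap,
    Function.comp_apply, map_tmul, LinearMap.mul'_apply, map_mul, LinearMap.applyₗ_apply_apply,
    Module.End.mul_apply] at coassoc
  rw [𝓡.convAct_tmul, Module.End.mul_apply, 𝓡.convAct_tmul, map_sum]
  refine (Finset.sum_congr rfl fun i _ ↦ ?_).trans
    (coassoc.symm.trans (Finset.sum_congr rfl fun i _ ↦ ?_))
  · simp [(ℛ R (𝓡.right i)).convMul_apply, tmul_sum]
  · rw [(ℛ R (𝓡.left i)).convAct_tmul]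

lemma lid_rTensor_counit_convAct (φ : WithConv (C →ₗ[R] A)) (c : C) (m : M) :
    TensorProduct.lid R M (counit.rTensor M (convAct ρ φ (c ⊗ₜ m))) = ρ (φ c) m := by
  conv_rhs => rw [← sum_counit_smul (ℛ R c)]
  simp [(ℛ R c).convAct_tmul, map_sum]

@[simps]
noncomputable def convActHom : WithConv (C →ₗ[R] A) →+* Module.End R (C ⊗[R] M) where
  toFun := convAct ρ
  map_one' := convAct_one ρ
  map_mul' := convAct_mul ρ
  map_zero' := by ext; simp [convAct]
  map_add' _ _ := by ext; simp [convAct, LinearMap.lTensor_add, add_tmul]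

lemma convActHom_injective (hρ : Function.Injective ρ) :
    Function.Injective (convActHom ρ : WithConv (C →ₗ[R] A) → _) := by
  intro φ ψ h
  ext c : 2
  refine hρ (LinearMap.ext fun m ↦ ?_)
  simpa only [convActHom_apply, lid_rTensor_counit_convAct] using
    congr(TensorProduct.lid R M (counit.rTensor M ($h (c ⊗ₜ m))))

end ConvAct

noncomputable def dualRightRegular (R A : Type*) [CommSemiring R] [Semiring A] [Algebra R A] :
    A →ₐ[R] Module.End R (Module.Dual R A) :=
  AlgHom.ofLinearMap ((LinearMap.llcomp R A A R).flip ∘ₗ (LinearMap.mul R A).flip)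
    (by ext; simp) (by intros; ext; simp [mul_assoc])

lemma dualRightRegular_injective (R A : Type*) [CommRing R] [Ring A] [Algebra R A]
    [Module.Projective R A] : Function.Injective (dualRightRegular R A) := by
  refine (injective_iff_map_eq_zero _).2 fun a ha ↦ ?_
  refine (Module.forall_dual_apply_eq_zero_iff R a).1 fun l ↦ ?_
  simpa [dualRightRegular] using congr($ha l 1)

lemma sigmaBi_eq_comm_comp_convActHom :
    sigmaBi k H = (TensorProduct.comm k H (Module.Dual k H)).toLinearMap
      ∘ₗ convActHom (dualRightRegular k H) (toConv LinearMap.id) := by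
  simp only [sigmaBi, convActHom_apply, convAct, LinearMap.lTensor_id, LinearMap.id_comp]
  rfl

/-- If `H` is a finite-dimensional bialgebra and `σ_bi` is bijective, then `H` admits an
antipode: there is a linear map `S : H → H` with
`Σ S(h₍₁₎) h₍₂₎ = ε(h) 1 = Σ h₍₁₎ S(h₍₂₎)` for all `h`. -/
theorem antipode_of_sigmaBi_bijective [FiniteDimensional k H]
    (hbij : Function.Bijective (sigmaBi k H)) :
    ∃ S : H →ₗ[k] H,
      (LinearMap.mul' k H) ∘ₗ (S.rTensor H) ∘ₗ (Coalgebra.comul (R := k) (A := H))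
          = (Algebra.linearMap k H) ∘ₗ (Coalgebra.counit (R := k) (A := H))
        ∧ (LinearMap.mul' k H) ∘ₗ (S.lTensor H) ∘ₗ (Coalgebra.comul (R := k) (A := H))
          = (Algebra.linearMap k H) ∘ₗ (Coalgebra.counit (R := k) (A := H)) := by
  have hunit : IsUnit (convActHom (dualRightRegular k H) (toConv LinearMap.id)) := by
    rw [sigmaBi_eq_comm_comp_convActHom, LinearMap.coe_comp] at hbij
    rw [Module.End.isUnit_iff]
    exact (Function.Bijective.of_comp_iff' (TensorProduct.comm k _ _).bijective _).1 hbij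
  obtain ⟨S, hright, hleft⟩ := isUnit_iff_exists.1 <| IsArtinianRing.isUnit_of_isUnit_map
    (convActHom_injective _ (dualRightRegular_injective k H)) hunit
  exact ⟨S.ofConv, congr(ofConv $hleft), congr(ofConv $hright)⟩
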